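/- arXiv:2307.04652 — 2 statements merged into one kernel-verified Lean document; each statement's English description precedes it below -/
import Mathlib

section
/- For integers ℓ, k ≥ 2, the length of the shortest odd cycle of the graph BQ̂(ℓ, 2k) equals min{2ℓ−1, 2k+1}. -/
/-- Adjacency relation of the cylindrical grid `C_{ℓ×m}`: vertex `v_{i,j}` is adjacent to
`v_{i+1,j-1}` and `v_{i+1,j}` (second index mod `m`). -/
def gridRel (ℓ m : ℕ) (x y : Fin ℓ × ZMod m) : Prop :=
  (y.1 : ℕ) = (x.1 : ℕ) + 1 ∧ (y.2 = x.2 - 1 ∨ y.2 = x.2)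

/-- Generating relation for the graph `BQ̂(ℓ, 2k)`: the cylindrical grid `C_{ℓ×2k}`, plus the
edges `v_{1,j}v_{1,j+k}` and `v_{2,j}v_{2,j+k}` (making the first two layers induce a Möbius
ladder), plus a new vertex `u` (encoded as `none`) adjacent to all vertices `v_{ℓ,j}` of the
last layer. -/
def bqEvenRel (ℓ k : ℕ) :
    Option (Fin ℓ × ZMod (2 * k)) → Option (Fin ℓ × ZMod (2 * k)) → Prop
  | some x, some y =>
      gridRel ℓ (2 * k) x y ∨
        (((x.1 : ℕ) = 0 ∧ (y.1 : ℕ) = 0) ∨ ((x.1 : ℕ) = 1 ∧ (y.1 : ℕ) = 1)) ∧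
          y.2 = x.2 + (k : ZMod (2 * k))
  | some x, none => (x.1 : ℕ) = ℓ - 1
  | none, _ => False

/-- The graph `BQ̂(ℓ, 2k)`. -/
def BQEven (ℓ k : ℕ) : SimpleGraph (Option (Fin ℓ × ZMod (2 * k))) :=
  SimpleGraph.fromRel (bqEvenRel ℓ k)

/-!
Every edge of `BQ̂(ℓ, 2k)` changes the layer by one, except the twisted edges `v_{i,j}v_{i,j+k}`
inside layers 1 and 2. So an odd closed walk through the apex `u` uses a twisted edge, and going
from `u` down to layer 2 and back up costs at least `2ℓ - 2` steps. An odd closed walk avoiding `u`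
is mapped to the cycle `ℤ/4k` by `v_{i,j} ↦ i + 2j`: grid edges move by `±1` and twisted edges
jump by `2k`. Parity forces an odd number of jumps, so the `±1` steps add up to `2k` modulo `4k`,
and there are at least `2k` of them. Both bounds are attained: by the cycle through `u` down the
column of `v_{ℓ,1}`, across `v_{2,1}v_{2,k+1}` and up again, and by the zigzag
`v_{1,1} v_{2,1} v_{1,2} v_{2,2} ⋯ v_{1,k+1}` closed by the twisted edge `v_{1,k+1}v_{1,1}`.
-/

namespace SimpleGraph

variable {V : Type*} {G : SimpleGraph V}

namespace Walk

lemma sum_darts_sub {A : Type*} [AddCommGroup A] (f : V → A) {u v : V} (p : G.Walk u v) :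
    (p.darts.map fun d => f d.snd - f d.fst).sum = f v - f u := by
  induction p with
  | nil => simp
  | cons h q ih => rw [darts_cons, List.map_cons, List.sum_cons, ih]; abel

lemma even_length_of_forall_darts_ne {f : V → ZMod 2} {v : V} (c : G.Walk v v)
    (hf : ∀ d ∈ c.darts, f d.snd ≠ f d.fst) : Even c.length := by
  have hsteps : (c.darts.map fun d => f d.snd - f d.fst) = List.replicate c.length 1 := by
    refine List.eq_replicate_iff.mpr ⟨by simp, fun x hx => ?_⟩
    obtain ⟨d, hd, rfl⟩ := List.mem_map.mp hx
    have key : ∀ a b : ZMod 2, a ≠ b → a - b = 1 := by decide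
    exact key _ _ (hf d hd)
  have := c.sum_darts_sub f
  rw [hsteps, List.sum_replicate, sub_self, nsmul_one] at this
  exact (ZMod.natCast_eq_zero_iff_even).mp this

lemma abs_sub_le_length {f : V → ℤ} (hf : ∀ ⦃x y⦄, G.Adj x y → |f x - f y| ≤ 1) {u v : V}
    (p : G.Walk u v) : |f u - f v| ≤ p.length := by
  induction p with
  | nil => simp
  | @cons u w v h q ih =>
    have := abs_sub_le (f u) (f w) (f v)
    have := hf h
    push_cast [length_cons]
    linarith

lemma two_mul_abs_sub_le_length {f : V → ℤ} (hf : ∀ ⦃x y⦄, G.Adj x y → |f x - f y| ≤ 1)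
    {v x y : V} (c : G.Walk v v) (hx : x ∈ c.support) (hy : y ∈ c.support) :
    2 * |f x - f y| ≤ c.length := by
  classical
  set c' := c.rotate x hx
  have hy' : y ∈ c'.support := (c.mem_support_rotate_iff x hx).mpr hy
  have hlen : c'.length = c.length := by
    rw [← length_darts, ← length_darts, (c.rotate_darts x hx).perm.length_eq]
  have hsplit := congrArg length (c'.take_spec hy')
  rw [length_append, hlen] at hsplit
  have h₁ := abs_sub_le_length hf (c'.takeUntil y hy')
  have h₂ := abs_sub_le_length hf (c'.dropUntil y hy')
  rw [abs_sub_comm] at h₂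
  omega

end Walk

lemma exists_isCycle_of_injOn {n : ℕ} (hn : 3 ≤ n) (g : ℕ → V) (hinj : Set.InjOn g (Set.Iio n))
    (hadj : ∀ i, i + 1 < n → G.Adj (g i) (g (i + 1))) (hclose : G.Adj (g (n - 1)) (g 0)) :
    ∃ (v : V) (p : G.Walk v v), p.IsCycle ∧ p.length = n := by
  have hstep : ∀ a b : Fin n, (a - b).val = 1 → G.Adj (g b) (g a) := by
    intro a b h
    rcases le_or_gt b a with hba | hab
    · rw [Fin.coe_sub_iff_le.mpr hba] at h
      rw [show (a : ℕ) = b + 1 by omega]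
      exact hadj b (by omega)
    · rw [Fin.coe_sub_iff_lt.mpr hab] at h
      rw [show (a : ℕ) = 0 by omega, show (b : ℕ) = n - 1 by omega]
      exact hclose
  refine (cycleGraph_isContained_iff hn).mp
    ⟨⟨⟨fun i => g i, fun {a b} hab => ?_⟩, fun a b h => Fin.ext (hinj a.isLt b.isLt h)⟩⟩
  rcases cycleGraph_adj'.mp hab with h | h
  · exact (hstep a b h).symm
  · exact hstep b a h

end SimpleGraph

lemma ZMod.natCast_ne_zero_of_pos_of_lt {a n : ℕ} (ha : 0 < a) (han : a < n) : (a : ZMod n) ≠ 0 :=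
  fun h => ha.ne' (Nat.eq_zero_of_dvd_of_lt ((ZMod.natCast_eq_zero_iff a n).mp h) han)

lemma List.add_one_le_length_of_sum_eq_zero {m : ℕ} {l : List (ZMod (2 * m))}
    (hl : ∀ x ∈ l, x = 1 ∨ x = -1 ∨ x = m) (hsum : l.sum = 0) (hodd : Odd l.length) :
    m + 1 ≤ l.length := by
  -- `p` steps `1`, `q` steps `-1` and `e` steps `m`
  obtain ⟨p, q, e, hlen, hsum'⟩ : ∃ p q e : ℕ, l.length = p + q + e ∧
      l.sum = ((p : ℤ) - q + e * m : ℤ) := by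
    clear hsum hodd
    induction l with
    | nil => exact ⟨0, 0, 0, by simp, by simp⟩
    | cons x l ih =>
      obtain ⟨p, q, e, hlen, hs⟩ := ih fun y hy => hl y (mem_cons_of_mem _ hy)
      rcases hl x mem_cons_self with rfl | rfl | rfl
      · exact ⟨p + 1, q, e, by rw [length_cons, hlen]; omega, by rw [sum_cons, hs]; push_cast; ring⟩
      · exact ⟨p, q + 1, e, by rw [length_cons, hlen]; omega, by rw [sum_cons, hs]; push_cast; ring⟩
      · exact ⟨p, q, e + 1, by rw [length_cons, hlen]; omega, by rw [sum_cons, hs]; push_cast; ring⟩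
  rw [hsum, eq_comm, ZMod.intCast_zmod_eq_zero_iff_dvd] at hsum'
  obtain ⟨c, hc⟩ := hsum'
  obtain ⟨r, hr⟩ := hodd
  rcases Nat.even_or_odd e with ⟨e', rfl⟩ | ⟨e', rfl⟩
  · have : (p : ℤ) - q = 2 * (m * (c - e')) := by push_cast at hc; linear_combination hc
    omega
  · have hpq : (p : ℤ) - q = m * (2 * (c - e') - 1) := by push_cast at hc; linear_combination hc
    rcases le_or_gt (c - e') 0 with h | h <;> nlinarith

open SimpleGraph

namespace BQEven

variable {ℓ k : ℕ}

lemma adj_iff {x y : Option (Fin ℓ × ZMod (2 * k))} :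
    (BQEven ℓ k).Adj x y ↔ x ≠ y ∧ (bqEvenRel ℓ k x y ∨ bqEvenRel ℓ k y x) :=
  fromRel_adj _ _ _

def height : Option (Fin ℓ × ZMod (2 * k)) → ℤ
  | none => ℓ
  | some x => x.1

lemma height_adj {x y : Option (Fin ℓ × ZMod (2 * k))} (h : (BQEven ℓ k).Adj x y) :
    height y = height x + 1 ∨ height x = height y + 1 ∨ (height x = height y ∧ height x ≤ 1) := by
  rw [adj_iff] at h
  rcases x with _ | ⟨⟨i, hi⟩, j⟩ <;> rcases y with _ | ⟨⟨i', hi'⟩, j'⟩ <;>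
    simp [bqEvenRel, gridRel, height] at h ⊢ <;> omega

lemma abs_height_sub_le_one {x y : Option (Fin ℓ × ZMod (2 * k))} (h : (BQEven ℓ k).Adj x y) :
    |height x - height y| ≤ 1 := by
  rw [abs_le]
  rcases height_adj h with h | h | h <;> omega

lemma two_mul_sub_one_le_length {v : Option (Fin ℓ × ZMod (2 * k))} (c : (BQEven ℓ k).Walk v v)
    (hu : none ∈ c.support) (hodd : Odd c.length) : 2 * ℓ - 1 ≤ c.length := by
  obtain ⟨d, hd, hlow⟩ : ∃ d ∈ c.darts, height d.fst ≤ 1 := by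
    by_contra! hsteep
    -- only twisted edges preserve the parity of the height
    refine Nat.not_even_iff_odd.mpr hodd
      (c.even_length_of_forall_darts_ne (f := fun x => (height x : ZMod 2)) fun d hd => ?_)
    rcases height_adj d.adj with h | h | h
    · simp [h]
    · simp [h]
    · exact absurd h.2 (hsteep d hd).not_ge
  have := c.two_mul_abs_sub_le_length (f := height) (fun _ _ h => abs_height_sub_le_one h) hu
    (c.dart_fst_mem_support_of_mem_darts hd)
  have := le_abs_self (height (none : Option (Fin ℓ × ZMod (2 * k))) - height d.fst)
  have hapex : height (none : Option (Fin ℓ × ZMod (2 * k))) = ℓ := rfl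
  obtain ⟨r, hr⟩ := hodd
  omega

def double (k : ℕ) : ZMod (2 * k) →+ ZMod (2 * (2 * k)) :=
  ZMod.lift _ ⟨2 • Int.castAddHom _, by simpa [mul_comm] using ZMod.natCast_self (2 * (2 * k))⟩

lemma double_natCast (n : ℕ) : double k n = 2 * n := by
  rw [← Int.cast_natCast, double, ZMod.lift_coe]
  simp [two_mul]

def cyclePos : Option (Fin ℓ × ZMod (2 * k)) → ZMod (2 * (2 * k))
  | none => 0
  | some x => (x.1 : ℕ) + double k x.2

lemma cyclePos_adj {a b : Fin ℓ × ZMod (2 * k)} (h : (BQEven ℓ k).Adj (some a) (some b)) :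
    cyclePos (some b) - cyclePos (some a) = 1 ∨ cyclePos (some b) - cyclePos (some a) = -1 ∨
      cyclePos (some b) - cyclePos (some a) = (2 * k : ℕ) := by
  have h4k : ((2 * k : ℕ) : ZMod (2 * (2 * k))) + (2 * k : ℕ) = 0 := by
    rw [← Nat.cast_add, ← two_mul, ZMod.natCast_self]
  have hone : double k 1 = 2 := by simpa using double_natCast (k := k) 1
  obtain ⟨⟨i, hi⟩, j⟩ := a
  obtain ⟨⟨i', hi'⟩, j'⟩ := b
  rw [adj_iff] at h
  simp only [bqEvenRel, gridRel] at h
  simp only [cyclePos]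
  rcases h with ⟨-, (⟨rfl, rfl | rfl⟩ | ⟨hi, rfl⟩) | (⟨rfl, rfl | rfl⟩ | ⟨hi, rfl⟩)⟩
  · right; left; rw [map_sub, hone]; push_cast; ring
  · left; push_cast; ring
  · obtain rfl : i' = i := by omega
    right; right; rw [map_add, double_natCast]; push_cast; ring
  · left; rw [map_sub, hone]; push_cast; ring
  · right; left; push_cast; ring
  · obtain rfl : i' = i := by omega
    right; right; rw [map_add, double_natCast]; push_cast at h4k ⊢; linear_combination -h4k

lemma two_mul_add_one_le_length {v : Option (Fin ℓ × ZMod (2 * k))} (c : (BQEven ℓ k).Walk v v)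
    (hu : none ∉ c.support) (hodd : Odd c.length) : 2 * k + 1 ≤ c.length := by
  have hsome : ∀ x ∈ c.support, ∃ a, x = some a := fun x hx =>
    Option.ne_none_iff_exists'.mp fun h => hu (h ▸ hx)
  have hsteps : ∀ x ∈ c.darts.map (fun d => cyclePos d.snd - cyclePos d.fst),
      x = 1 ∨ x = -1 ∨ x = ((2 * k : ℕ) : ZMod (2 * (2 * k))) := by
    intro x hx
    obtain ⟨d, hd, rfl⟩ := List.mem_map.mp hx
    obtain ⟨a, ha⟩ := hsome _ (c.dart_fst_mem_support_of_mem_darts hd)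
    obtain ⟨b, hb⟩ := hsome _ (c.dart_snd_mem_support_of_mem_darts hd)
    have hab := d.adj
    rw [ha, hb] at hab ⊢
    exact cyclePos_adj hab
  simpa using List.add_one_le_length_of_sum_eq_zero hsteps
    (by rw [c.sum_darts_sub, sub_self]) (by simpa using hodd)

lemma min_le_length_of_odd {v : Option (Fin ℓ × ZMod (2 * k))} (c : (BQEven ℓ k).Walk v v)
    (hodd : Odd c.length) : min (2 * ℓ - 1) (2 * k + 1) ≤ c.length := by
  by_cases hu : none ∈ c.support
  · exact (min_le_left _ _).trans (two_mul_sub_one_le_length c hu hodd)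
  · exact (min_le_right _ _).trans (two_mul_add_one_le_length c hu hodd)

/-- The paper's `v_{i+1,j+1}`: layers are indexed from `0`, and every `i ≥ ℓ` gives the apex. -/
def vertex (ℓ k i : ℕ) (j : ZMod (2 * k)) : Option (Fin ℓ × ZMod (2 * k)) :=
  if h : i < ℓ then some (⟨i, h⟩, j) else none

lemma vertex_of_le {i : ℕ} (h : ℓ ≤ i) (j : ZMod (2 * k)) : vertex ℓ k i j = none :=
  dif_neg h.not_gt

lemma vertex_eq_vertex {i i' : ℕ} {j j' : ZMod (2 * k)} (h : vertex ℓ k i j = vertex ℓ k i' j') :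
    (ℓ ≤ i ∧ ℓ ≤ i') ∨ (i = i' ∧ j = j') := by
  unfold vertex at h
  split_ifs at h <;> simp_all

lemma adj_vertex_succ {i : ℕ} (h : i < ℓ) (j : ZMod (2 * k)) :
    (BQEven ℓ k).Adj (vertex ℓ k i j) (vertex ℓ k (i + 1) j) := by
  by_cases h' : i + 1 < ℓ
  · simp [vertex, h, h', adj_iff, bqEvenRel, gridRel]
  · rw [vertex_of_le (not_lt.mp h')]
    simp [vertex, h, adj_iff, bqEvenRel]
    omega

lemma adj_vertex_succ_sub_one {i : ℕ} (h : i + 1 < ℓ) (j : ZMod (2 * k)) :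
    (BQEven ℓ k).Adj (vertex ℓ k i j) (vertex ℓ k (i + 1) (j - 1)) := by
  simp [vertex, h, (by omega : i < ℓ), adj_iff, bqEvenRel, gridRel]

lemma adj_vertex_add {i : ℕ} (hi : i ≤ 1) (hiℓ : i < ℓ) (hk : k ≠ 0) (j : ZMod (2 * k)) :
    (BQEven ℓ k).Adj (vertex ℓ k i j) (vertex ℓ k i (j + k)) := by
  have hk' : (k : ZMod (2 * k)) ≠ 0 := ZMod.natCast_ne_zero_of_pos_of_lt (by omega) (by omega)
  simp [vertex, hiℓ, hk', adj_iff, bqEvenRel]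
  omega

lemma exists_isCycle_length_two_mul_sub_one (hℓ : 2 ≤ ℓ) (hk : k ≠ 0) :
    ∃ (v : Option (Fin ℓ × ZMod (2 * k))) (c : (BQEven ℓ k).Walk v v),
      c.IsCycle ∧ c.length = 2 * ℓ - 1 := by
  have h0k : (0 : ZMod (2 * k)) ≠ k :=
    (ZMod.natCast_ne_zero_of_pos_of_lt (by omega) (by omega)).symm
  refine exists_isCycle_of_injOn (by omega)
    (fun t => if t < ℓ then vertex ℓ k (ℓ - t) 0 else vertex ℓ k (t + 1 - ℓ) k) ?_ ?_ ?_
  · intro t ht t' ht' h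
    simp only [Set.mem_Iio] at ht ht'
    dsimp only at h
    split_ifs at h <;> rcases vertex_eq_vertex h with h | ⟨h, hj⟩ <;>
      first | omega | exact absurd hj h0k | exact absurd hj.symm h0k
  · intro t ht
    rcases lt_trichotomy (t + 1) ℓ with h | h | h
    · rw [if_pos (by omega), if_pos h, show ℓ - t = ℓ - (t + 1) + 1 by omega]
      exact (adj_vertex_succ (by omega) 0).symm
    · rw [if_pos (by omega), if_neg (by omega), show ℓ - t = 1 by omega,
        show t + 1 + 1 - ℓ = 1 by omega]
      simpa using adj_vertex_add le_rfl (by omega) hk 0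
    · rw [if_neg (by omega), if_neg (by omega), show t + 1 + 1 - ℓ = t + 1 - ℓ + 1 by omega]
      exact adj_vertex_succ (by omega) _
  · have hclose := adj_vertex_succ (show ℓ - 1 < ℓ by omega) (k : ZMod (2 * k))
    rw [Nat.sub_add_cancel (by omega), vertex_of_le le_rfl] at hclose
    rwa [if_neg (by omega), if_pos (by omega), Nat.sub_zero, vertex_of_le le_rfl,
      show 2 * ℓ - 1 - 1 + 1 - ℓ = ℓ - 1 by omega]

lemma exists_isCycle_length_two_mul_add_one (hℓ : 2 ≤ ℓ) (hk : k ≠ 0) :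
    ∃ (v : Option (Fin ℓ × ZMod (2 * k))) (c : (BQEven ℓ k).Walk v v),
      c.IsCycle ∧ c.length = 2 * k + 1 := by
  refine exists_isCycle_of_injOn (by omega)
    (fun t => vertex ℓ k (t % 2) (t / 2 : ℕ)) ?_ ?_ ?_
  · intro t ht t' ht' h
    simp only [Set.mem_Iio] at ht ht'
    rcases vertex_eq_vertex h with h | ⟨hmod, hdiv⟩
    · omega
    · rw [ZMod.natCast_eq_natCast_iff', Nat.mod_eq_of_lt (by omega),
        Nat.mod_eq_of_lt (by omega)] at hdiv
      omega
  · intro t ht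
    obtain ⟨s, rfl | rfl⟩ : ∃ s, t = 2 * s ∨ t = 2 * s + 1 := ⟨t / 2, by omega⟩
    · rw [show 2 * s % 2 = 0 by omega, show 2 * s / 2 = s by omega,
        show (2 * s + 1) % 2 = 0 + 1 by omega, show (2 * s + 1) / 2 = s by omega]
      exact adj_vertex_succ (by omega) _
    · rw [show (2 * s + 1) % 2 = 0 + 1 by omega, show (2 * s + 1) / 2 = s by omega,
        show (2 * s + 1 + 1) % 2 = 0 by omega, show (2 * s + 1 + 1) / 2 = s + 1 by omega]
      simpa using (adj_vertex_succ_sub_one (i := 0) (by omega) ((s + 1 : ℕ) : ZMod (2 * k))).symm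
  · have hkk : (k : ZMod (2 * k)) + k = 0 := by rw [← Nat.cast_add, ← two_mul, ZMod.natCast_self]
    simpa [hkk] using adj_vertex_add (i := 0) zero_le_one (by omega) hk (k : ZMod (2 * k))

end BQEven

/-- For integers `ℓ, k ≥ 2`, the length of the shortest odd cycle (the odd girth) of the graph
`BQ̂(ℓ, 2k)` equals `min (2ℓ - 1) (2k + 1)`. -/
theorem oddGirth_BQEven (ℓ k : ℕ) (hℓ : 2 ≤ ℓ) (hk : 2 ≤ k) :
    IsLeast {L : ℕ | Odd L ∧ ∃ (v : Option (Fin ℓ × ZMod (2 * k)))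
        (w : (BQEven ℓ k).Walk v v), w.IsCycle ∧ w.length = L}
      (min (2 * ℓ - 1) (2 * k + 1)) := by
  refine ⟨?_, fun L ⟨hodd, v, w, _, hL⟩ => hL ▸ BQEven.min_le_length_of_odd w (hL ▸ hodd)⟩
  rcases le_total ℓ (k + 1) with h | h
  · rw [min_eq_left (by omega)]
    exact ⟨⟨ℓ - 1, by omega⟩, BQEven.exists_isCycle_length_two_mul_sub_one hℓ (by omega)⟩
  · rw [min_eq_right (by omega)]
    exact ⟨⟨k, rfl⟩, BQEven.exists_isCycle_length_two_mul_add_one hℓ (by omega)⟩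
end

section
/- For any positive integers ℓ and k (ℓ, k ≥ 2), the circular chromatic number of the graph BQ̂(ℓ, 2k), with all edges negative, equals 4. -/
-- ## Auxiliary development

noncomputable def wdf (r a b : ℝ) : ℝ := Int.fract ((b - a) / r) * r
noncomputable def nnf (r a b : ℝ) : ℤ := ⌊(b - a) / r⌋
noncomputable def thf (r a b : ℝ) : ℝ := 2 * wdf r a b - r

lemma wdf_eq (r a b : ℝ) (hr : r ≠ 0) : wdf r a b = (b - a) - r * nnf r a b := by
  unfold wdf nnf Int.fract; field_simp

lemma thf_eq (r a b : ℝ) (hr : r ≠ 0) :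
    thf r a b = 2*(b-a) - r*(2*(nnf r a b : ℝ) + 1) := by
  rw [thf, wdf_eq r a b hr]; ring

lemma dist_coe_eq (r : ℝ) (hr : 0 < r) (a b : ℝ) :
    dist ((a : AddCircle r)) ((b : AddCircle r))
      = r * min (Int.fract ((b-a)/r)) (1 - Int.fract ((b-a)/r)) := by
  rw [dist_eq_norm']
  have : (b : AddCircle r) - (a : AddCircle r) = ((b - a : ℝ) : AddCircle r) := by
    norm_cast
  rw [this, AddCircle.norm_eq' (p := r) hr, ← abs_sub_round_eq_min]
  rw [inv_mul_eq_div]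

lemma wdf_bounds (r : ℝ) (hr : 0 < r) (a b : ℝ)
    (h : 1 ≤ dist ((a : AddCircle r)) ((b : AddCircle r))) :
    1 ≤ wdf r a b ∧ wdf r a b ≤ r - 1 := by
  rw [dist_coe_eq r hr] at h
  set f := Int.fract ((b-a)/r) with hf
  constructor
  · have h1 : 1 ≤ r * f := le_trans h (by
      have := min_le_left f (1 - f); nlinarith)
    rw [wdf, ← hf]; nlinarith
  · have h2 : 1 ≤ r * (1 - f) := le_trans h (by
      have := min_le_right f (1 - f); nlinarith)
    rw [wdf, ← hf]; nlinarith

lemma wdf_antisym (r : ℝ) (hr : 0 < r) (a b : ℝ) (h1 : 1 ≤ wdf r a b) :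
    wdf r b a = r - wdf r a b := by
  have hfne : Int.fract ((b-a)/r) ≠ 0 := by
    intro h
    rw [wdf, h, zero_mul] at h1; linarith
  have : (a - b) / r = -((b-a)/r) := by ring
  rw [wdf, this, Int.fract_neg hfne, wdf]; ring

lemma thf_antisym (r : ℝ) (hr : 0 < r) (a b : ℝ) (h1 : 1 ≤ wdf r a b) :
    thf r b a = - thf r a b := by
  rw [thf, thf, wdf_antisym r hr a b h1]; ring

lemma face4 (r : ℝ) (hr2 : 2 ≤ r) (hr4 : r < 4) (a b c d : ℝ)
    (hab : 1 ≤ dist ((a : AddCircle r)) ((b : AddCircle r)))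
    (hbc : 1 ≤ dist ((b : AddCircle r)) ((c : AddCircle r)))
    (hcd : 1 ≤ dist ((c : AddCircle r)) ((d : AddCircle r)))
    (hda : 1 ≤ dist ((d : AddCircle r)) ((a : AddCircle r))) :
    thf r a b + thf r b c + thf r c d + thf r d a = 0 := by
  have hr0 : (0:ℝ) < r := by linarith
  have hrne : r ≠ 0 := ne_of_gt hr0
  obtain ⟨h1, h1'⟩ := wdf_bounds r hr0 a b hab
  obtain ⟨h2, h2'⟩ := wdf_bounds r hr0 b c hbc
  obtain ⟨h3, h3'⟩ := wdf_bounds r hr0 c d hcd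
  obtain ⟨h4, h4'⟩ := wdf_bounds r hr0 d a hda
  set N : ℤ := nnf r a b + nnf r b c + nnf r c d + nnf r d a with hN
  have hsum : thf r a b + thf r b c + thf r c d + thf r d a = - r * (2*(N:ℝ) + 4) := by
    rw [thf_eq r a b hrne, thf_eq r b c hrne, thf_eq r c d hrne, thf_eq r d a hrne, hN]
    push_cast; ring
  have hbound : |thf r a b + thf r b c + thf r c d + thf r d a| ≤ 4*(r-2) := by
    have e1 : |thf r a b| ≤ r - 2 := by rw [thf]; rw [abs_le]; constructor <;> nlinarith
    have e2 : |thf r b c| ≤ r - 2 := by rw [thf]; rw [abs_le]; constructor <;> nlinarith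
    have e3 : |thf r c d| ≤ r - 2 := by rw [thf]; rw [abs_le]; constructor <;> nlinarith
    have e4 : |thf r d a| ≤ r - 2 := by rw [thf]; rw [abs_le]; constructor <;> nlinarith
    calc |thf r a b + thf r b c + thf r c d + thf r d a|
        ≤ |thf r a b| + |thf r b c| + |thf r c d| + |thf r d a| := by
          apply (abs_add_le _ _).trans; gcongr; apply (abs_add_le _ _).trans; gcongr
          exact abs_add_le _ _
      _ ≤ 4*(r-2) := by linarith
  have hNval : N = -2 := by
    rw [hsum] at hbound
    rw [abs_mul, abs_neg, abs_of_pos hr0] at hbound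
    have : |2*(N:ℝ) + 4| < 2 := by nlinarith
    have h2 : |(2*N + 4 : ℤ)| < 2 := by exact_mod_cast (by push_cast; convert this using 2 <;> push_cast <;> ring : |((2*N+4 : ℤ) : ℝ)| < 2)
    have := abs_lt.mp h2; omega
  rw [hsum, hNval]; norm_num

section Adj
variable {ℓ k : ℕ} (hℓ : 2 ≤ ℓ) (hk : 2 ≤ k)

/-- total vertex function -/
def vt (ℓ k : ℕ) (i : ℕ) (j : ZMod (2*k)) : Option (Fin ℓ × ZMod (2 * k)) :=
  if h : i < ℓ then some (⟨i, h⟩, j) else none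

lemma vt_eq {i : ℕ} (h : i < ℓ) (j : ZMod (2*k)) : vt ℓ k i j = some (⟨i, h⟩, j) :=
  dif_pos h

include hk in
lemma kne : (k : ZMod (2*k)) ≠ 0 := by
  intro h
  have h2 : ((k : ZMod (2*k)).val) = k := ZMod.val_cast_of_lt (by omega)
  rw [h] at h2
  haveI : NeZero (2*k) := ⟨by omega⟩
  rw [ZMod.val_zero] at h2
  omega

lemma adj_vert {i : ℕ} (h : i + 1 < ℓ) (j : ZMod (2*k)) :
    (BQEven ℓ k).Adj (vt ℓ k i j) (vt ℓ k (i+1) j) := by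
  have hi : i < ℓ := by omega
  rw [vt_eq hi, vt_eq h, BQEven, SimpleGraph.fromRel_adj]
  constructor
  · simp only [ne_eq, Option.some.injEq, Prod.mk.injEq, Fin.mk.injEq, not_and]
    omega
  · exact Or.inl (Or.inl ⟨rfl, Or.inr rfl⟩)

lemma adj_diag {i : ℕ} (h : i + 1 < ℓ) (j : ZMod (2*k)) :
    (BQEven ℓ k).Adj (vt ℓ k (i+1) j) (vt ℓ k i (j+1)) := by
  have hi : i < ℓ := by omega
  rw [vt_eq hi, vt_eq h, BQEven, SimpleGraph.fromRel_adj]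
  constructor
  · simp only [ne_eq, Option.some.injEq, Prod.mk.injEq, Fin.mk.injEq, not_and]
    omega
  · refine Or.inr (Or.inl ⟨rfl, Or.inl ?_⟩)
    simp only [add_sub_cancel_right]

include hℓ hk in
lemma adj_chord0 (j : ZMod (2*k)) :
    (BQEven ℓ k).Adj (vt ℓ k 0 j) (vt ℓ k 0 (j + (k : ZMod (2*k)))) := by
  have h0 : 0 < ℓ := by omega
  rw [vt_eq h0, vt_eq h0, BQEven, SimpleGraph.fromRel_adj]
  constructor
  · simp only [ne_eq, Option.some.injEq, Prod.mk.injEq, true_and]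
    intro hj
    exact kne hk (by rwa [left_eq_add] at hj)
  · exact Or.inl (Or.inr ⟨Or.inl ⟨rfl, rfl⟩, rfl⟩)

include hℓ hk in
lemma adj_chord1 (j : ZMod (2*k)) :
    (BQEven ℓ k).Adj (vt ℓ k 1 j) (vt ℓ k 1 (j + (k : ZMod (2*k)))) := by
  have h1 : 1 < ℓ := by omega
  rw [vt_eq h1, vt_eq h1, BQEven, SimpleGraph.fromRel_adj]
  constructor
  · simp only [ne_eq, Option.some.injEq, Prod.mk.injEq, true_and]
    intro hj
    exact kne hk (by rwa [left_eq_add] at hj)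
  · exact Or.inl (Or.inr ⟨Or.inr ⟨rfl, rfl⟩, rfl⟩)

include hℓ in
lemma adj_apex (j : ZMod (2*k)) :
    (BQEven ℓ k).Adj (vt ℓ k (ℓ-1) j) none := by
  have h : ℓ - 1 < ℓ := by omega
  rw [vt_eq h, BQEven, SimpleGraph.fromRel_adj]
  exact ⟨by simp, Or.inl rfl⟩

end Adj

lemma bq_lower (ℓ k : ℕ) (hℓ : 2 ≤ ℓ) (hk : 2 ≤ k) (r : ℝ) (hr2 : 2 ≤ r) (hr4 : r < 4)
    (φ : Option (Fin ℓ × ZMod (2*k)) → AddCircle r)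
    (hφ : ∀ u v, (BQEven ℓ k).Adj u v → 1 ≤ dist (φ u) (φ v)) : False := by
  haveI : NeZero (2*k) := ⟨by omega⟩
  have hr0 : (0:ℝ) < r := by linarith
  have hrne : r ≠ 0 := ne_of_gt hr0
  -- lift of the coloring
  have hsurj : ∀ v, ∃ y : ℝ, (y : AddCircle r) = φ v := fun v => QuotientAddGroup.mk_surjective (φ v)
  choose g hg using hsurj
  set Th : Option (Fin ℓ × ZMod (2*k)) → Option (Fin ℓ × ZMod (2*k)) → ℝ :=
    fun u v => thf r (g u) (g v) with hTh
  set NN : Option (Fin ℓ × ZMod (2*k)) → Option (Fin ℓ × ZMod (2*k)) → ℤ :=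
    fun u v => nnf r (g u) (g v) with hNN
  have hdist : ∀ u v, (BQEven ℓ k).Adj u v →
      1 ≤ dist ((g u : ℝ) : AddCircle r) ((g v : ℝ) : AddCircle r) := by
    intro u v h; rw [hg u, hg v]; exact hφ u v h
  have hanti : ∀ u v, (BQEven ℓ k).Adj u v → Th v u = - Th u v := by
    intro u v h
    exact thf_antisym r hr0 _ _ (wdf_bounds r hr0 _ _ (hdist u v h)).1
  have hface : ∀ a b c d, (BQEven ℓ k).Adj a b → (BQEven ℓ k).Adj b c →
      (BQEven ℓ k).Adj c d → (BQEven ℓ k).Adj d a →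
      Th a b + Th b c + Th c d + Th d a = 0 := by
    intro a b c d h1 h2 h3 h4
    exact face4 r hr2 hr4 _ _ _ _ (hdist _ _ h1) (hdist _ _ h2) (hdist _ _ h3) (hdist _ _ h4)
  have hthform : ∀ u v, Th u v = 2*(g v - g u) - r*(2*(NN u v : ℝ) + 1) := by
    intro u v; exact thf_eq r _ _ hrne
  -- reindexing lemma
  have reidx1 : ∀ F : ZMod (2*k) → ℝ, (∑ j : ZMod (2*k), F (j+1)) = ∑ j : ZMod (2*k), F j := by
    intro F
    exact Fintype.sum_equiv (Equiv.addRight 1) _ _ (fun j => by rw [Equiv.coe_addRight])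
  have hkk : ((k : ZMod (2*k)) + (k : ZMod (2*k))) = 0 := by
    have h1 : ((k + k : ℕ) : ZMod (2*k)) = 0 := by
      rw [show k + k = 2*k by ring, ZMod.natCast_self]
    rwa [Nat.cast_add] at h1
  
  -- the zig-zag sums between consecutive layers
  set Ee : ℕ → ℝ := fun i => ∑ j : ZMod (2*k),
    (Th (vt ℓ k i j) (vt ℓ k (i+1) j) + Th (vt ℓ k (i+1) j) (vt ℓ k i (j+1))) with hEe
  -- the top zig-zag sum vanishes (apex faces)
  have htop : ∀ i, i + 2 = ℓ → Ee i = 0 := by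
    intro i hi
    have hi1 : i + 1 < ℓ := by omega
    have hl1 : ℓ - 1 = i + 1 := by omega
    have hap : ∀ j : ZMod (2*k), (BQEven ℓ k).Adj (vt ℓ k (i+1) j) none := by
      intro j; have := adj_apex (ℓ := ℓ) (k := k) hℓ j; rwa [hl1] at this
    have key : ∀ j : ZMod (2*k),
        Th (vt ℓ k i (j+1)) (vt ℓ k (i+1) (j+1)) + Th (vt ℓ k (i+1) j) (vt ℓ k i (j+1))
          = Th (vt ℓ k (i+1) j) none - Th (vt ℓ k (i+1) (j+1)) none := by
      intro j
      have hf := hface (vt ℓ k i (j+1)) (vt ℓ k (i+1) (j+1)) none (vt ℓ k (i+1) j)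
        (adj_vert hi1 (j+1)) (hap (j+1)) ((hap j).symm) (adj_diag hi1 j)
      have h2 := hanti _ _ (hap j)
      rw [h2] at hf; linarith
    calc Ee i = ∑ j : ZMod (2*k),
          (Th (vt ℓ k i (j+1)) (vt ℓ k (i+1) (j+1)) + Th (vt ℓ k (i+1) j) (vt ℓ k i (j+1))) := by
          simp only [hEe]
          rw [Finset.sum_add_distrib, Finset.sum_add_distrib]
          congr 1
          exact (reidx1 (fun j => Th (vt ℓ k i j) (vt ℓ k (i+1) j))).symm
      _ = ∑ j : ZMod (2*k), (Th (vt ℓ k (i+1) j) none - Th (vt ℓ k (i+1) (j+1)) none) :=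
          Finset.sum_congr rfl (fun j _ => key j)
      _ = 0 := by
          rw [Finset.sum_sub_distrib, reidx1 (fun j => Th (vt ℓ k (i+1) j) none), sub_self]
  -- consecutive zig-zag sums agree (grid faces)
  have hstep : ∀ i, i + 3 ≤ ℓ → Ee i = Ee (i+1) := by
    intro i hi
    have hi1 : i + 1 < ℓ := by omega
    have e2 : i + 1 + 1 = i + 2 := rfl
    have key : ∀ j : ZMod (2*k),
        Th (vt ℓ k i (j+1)) (vt ℓ k (i+1) (j+1)) + Th (vt ℓ k (i+1) j) (vt ℓ k i (j+1))
          = Th (vt ℓ k (i+1) j) (vt ℓ k (i+2) j) + Th (vt ℓ k (i+2) j) (vt ℓ k (i+1) (j+1)) := by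
      intro j
      have h1 := adj_vert hi1 (j+1)
      have h2 : (BQEven ℓ k).Adj (vt ℓ k (i+2) j) (vt ℓ k (i+1) (j+1)) := by
        have := adj_diag (ℓ := ℓ) (k := k) (i := i+1) (by omega) j; rwa [e2] at this
      have h3 : (BQEven ℓ k).Adj (vt ℓ k (i+1) j) (vt ℓ k (i+2) j) := by
        have := adj_vert (ℓ := ℓ) (k := k) (i := i+1) (by omega) j; rwa [e2] at this
      have h4 := adj_diag hi1 j
      have hf := hface _ _ _ _ h1 h2.symm h3.symm h4
      have ha2 := hanti _ _ h2
      have ha3 := hanti _ _ h3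
      rw [ha2, ha3] at hf; linarith
    calc Ee i = ∑ j : ZMod (2*k),
          (Th (vt ℓ k i (j+1)) (vt ℓ k (i+1) (j+1)) + Th (vt ℓ k (i+1) j) (vt ℓ k i (j+1))) := by
          simp only [hEe]
          rw [Finset.sum_add_distrib, Finset.sum_add_distrib]
          congr 1
          exact (reidx1 (fun j => Th (vt ℓ k i j) (vt ℓ k (i+1) j))).symm
      _ = ∑ j : ZMod (2*k),
          (Th (vt ℓ k (i+1) j) (vt ℓ k (i+2) j) + Th (vt ℓ k (i+2) j) (vt ℓ k (i+1) (j+1))) :=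
          Finset.sum_congr rfl (fun j _ => key j)
      _ = Ee (i+1) := by simp only [hEe, e2]
  have hall : ∀ t i, i + 2 + t = ℓ → Ee i = 0 := by
    intro t
    induction t with
    | zero => intro i h; exact htop i (by omega)
    | succ t ih => intro i h; rw [hstep i (by omega)]; exact ih (i+1) (by omega)
  have hE0 : Ee 0 = 0 := hall (ℓ - 2) 0 (by omega)
  -- splitting a sum over `ZMod (2*k)`
  have zsplit : ∀ F : ZMod (2*k) → ℝ, (∑ j : ZMod (2*k), F j)
      = (∑ j ∈ Finset.range k, F (↑j)) + ∑ j ∈ Finset.range k, F (↑j + (k : ZMod (2*k))) := by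
    intro F
    have h1 : (∑ j : ZMod (2*k), F j) = ∑ j ∈ Finset.range (2*k), F (↑j) := by
      apply Finset.sum_nbij' (i := fun (j : ZMod (2*k)) => j.val)
        (j := fun (t : ℕ) => ((t : ZMod (2*k))))
      · intro a _; exact Finset.mem_range.mpr (ZMod.val_lt a)
      · intro a _; exact Finset.mem_univ _
      · intro a _; exact ZMod.natCast_rightInverse a
      · intro a ha; exact ZMod.val_cast_of_lt (Finset.mem_range.mp ha)
      · intro a _; rw [ZMod.natCast_rightInverse a]
    rw [h1, show Finset.range (2*k) = Finset.range (k+k) from by rw [two_mul],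
      Finset.sum_range_add (fun t : ℕ => F (↑t)) k k]
    congr 1
    apply Finset.sum_congr rfl
    intro j _
    congr 1
    push_cast
    ring
  
  -- Möbius ladder faces
  have h01 : (0:ℕ) + 1 < ℓ := by omega
  have hc0 : ∀ z : ZMod (2*k),
      (BQEven ℓ k).Adj (vt ℓ k 0 z) (vt ℓ k 0 (z + (k : ZMod (2*k)))) := adj_chord0 hℓ hk
  have hc1 : ∀ z : ZMod (2*k),
      (BQEven ℓ k).Adj (vt ℓ k 1 z) (vt ℓ k 1 (z + (k : ZMod (2*k)))) := adj_chord1 hℓ hk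
  have hc0' : ∀ z : ZMod (2*k),
      (BQEven ℓ k).Adj (vt ℓ k 0 (z + (k : ZMod (2*k)))) (vt ℓ k 0 z) := by
    intro z; have := hc0 (z + (k : ZMod (2*k))); rwa [add_assoc, hkk, add_zero] at this
  have hc1' : ∀ z : ZMod (2*k),
      (BQEven ℓ k).Adj (vt ℓ k 1 (z + (k : ZMod (2*k)))) (vt ℓ k 1 z) := by
    intro z; have := hc1 (z + (k : ZMod (2*k))); rwa [add_assoc, hkk, add_zero] at this
  have hvert01 : ∀ z : ZMod (2*k), (BQEven ℓ k).Adj (vt ℓ k 0 z) (vt ℓ k 1 z) :=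
    fun z => adj_vert h01 z
  have hdiag01 : ∀ z : ZMod (2*k), (BQEven ℓ k).Adj (vt ℓ k 1 z) (vt ℓ k 0 (z+1)) :=
    fun z => adj_diag h01 z
  have mobius : ∀ z : ZMod (2*k),
      (Th (vt ℓ k 0 z) (vt ℓ k 1 z) + Th (vt ℓ k 1 z) (vt ℓ k 0 (z+1)))
      - (Th (vt ℓ k 0 (z+↑k)) (vt ℓ k 1 (z+↑k)) + Th (vt ℓ k 1 (z+↑k)) (vt ℓ k 0 (z+↑k+1)))
      - Th (vt ℓ k 0 z) (vt ℓ k 0 (z+↑k))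
      + Th (vt ℓ k 0 (z+1)) (vt ℓ k 0 (z+1+↑k)) = 0 := by
    intro z
    have e1 : z + 1 + (k : ZMod (2*k)) = z + ↑k + 1 := by ring
    have hFm := hface (vt ℓ k 0 z) (vt ℓ k 1 z) (vt ℓ k 1 (z+↑k)) (vt ℓ k 0 (z+↑k))
      (hvert01 z) (hc1 z) ((hvert01 (z+↑k)).symm) (hc0' z)
    have hHm := hface (vt ℓ k 1 z) (vt ℓ k 0 (z+1)) (vt ℓ k 0 (z+1+↑k)) (vt ℓ k 1 (z+↑k))
      (hdiag01 z) (hc0 (z+1))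
      (by rw [e1]; exact (hdiag01 (z+↑k)).symm) (hc1' z)
    have ha1 := hanti _ _ (hvert01 (z+↑k))
    have ha2' : Th (vt ℓ k 0 (z+1+↑k)) (vt ℓ k 1 (z+↑k))
        = - Th (vt ℓ k 1 (z+↑k)) (vt ℓ k 0 (z+↑k+1)) := by
      rw [e1]; exact hanti _ _ (hdiag01 (z+↑k))
    have ha3 := hanti _ _ (hc0 z)
    have ha4 := hanti _ _ (hc1 z)
    rw [ha1, ha3] at hFm
    rw [ha2', ha4] at hHm
    linarith
  -- the two halves of the bottom zig-zag cycle
  set P : ℕ → ℝ := fun j =>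
    Th (vt ℓ k 0 (↑j)) (vt ℓ k 1 (↑j)) + Th (vt ℓ k 1 (↑j)) (vt ℓ k 0 ((↑j)+1)) with hP
  set Q : ℕ → ℝ := fun j =>
    Th (vt ℓ k 0 ((↑j)+↑k)) (vt ℓ k 1 ((↑j)+↑k)) + Th (vt ℓ k 1 ((↑j)+↑k)) (vt ℓ k 0 ((↑j)+↑k+1))
    with hQ
  set Rf : ℕ → ℝ := fun j => Th (vt ℓ k 0 (↑j)) (vt ℓ k 0 ((↑j)+↑k)) with hRf
  set X : ℝ := Th (vt ℓ k 0 (↑k : ZMod (2*k))) (vt ℓ k 0 0) with hX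
  have hRfk : Rf k = X := by
    simp only [hRf, hX]
    rw [hkk]
  
  have hchordanti : Th (vt ℓ k 0 0) (vt ℓ k 0 ((k : ZMod (2*k)))) = - X := by
    simp only [hX]
    have h := hc0 ((k : ZMod (2*k)))
    rw [hkk] at h
    exact hanti _ _ h
  have hRf0 : Rf 0 = - X := by
    simp only [hRf]
    rw [Nat.cast_zero, zero_add]
    exact hchordanti
  have hsplit1 : ∀ j : ℕ, P j - Q j - Rf j + Rf (j+1) = 0 := by
    intro j
    simp only [hP, hQ, hRf]
    push_cast
    exact mobius (↑j)
  have hsum1 : (∑ j ∈ Finset.range k, P j) - (∑ j ∈ Finset.range k, Q j)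
      + (Rf k - Rf 0) = 0 := by
    have h0 : ∑ j ∈ Finset.range k, (P j - Q j - Rf j + Rf (j+1)) = 0 :=
      Finset.sum_eq_zero (fun j _ => hsplit1 j)
    have h1 : ∑ j ∈ Finset.range k, (P j - Q j - Rf j + Rf (j+1))
        = ((∑ j ∈ Finset.range k, P j) - (∑ j ∈ Finset.range k, Q j))
          + ∑ j ∈ Finset.range k, (Rf (j+1) - Rf j) := by
      calc ∑ j ∈ Finset.range k, (P j - Q j - Rf j + Rf (j+1))
          = ∑ j ∈ Finset.range k, ((P j - Q j) + (Rf (j+1) - Rf j)) :=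
            Finset.sum_congr rfl (fun j _ => by ring)
        _ = (∑ j ∈ Finset.range k, (P j - Q j)) + ∑ j ∈ Finset.range k, (Rf (j+1) - Rf j) :=
            Finset.sum_add_distrib
        _ = ((∑ j ∈ Finset.range k, P j) - (∑ j ∈ Finset.range k, Q j))
            + ∑ j ∈ Finset.range k, (Rf (j+1) - Rf j) := by rw [Finset.sum_sub_distrib]
    rw [h1, Finset.sum_range_sub Rf k] at h0
    linarith
  have hEC_ED : (∑ j ∈ Finset.range k, P j) + X = (∑ j ∈ Finset.range k, Q j) - X := by
    rw [hRfk, hRf0] at hsum1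
    linarith
  have hE0split : (∑ j ∈ Finset.range k, P j) + (∑ j ∈ Finset.range k, Q j) = 0 := by
    have h := zsplit (fun z => Th (vt ℓ k 0 z) (vt ℓ k 1 z) + Th (vt ℓ k 1 z) (vt ℓ k 0 (z+1)))
    have hEe0 : Ee 0 = ∑ z : ZMod (2*k),
        (Th (vt ℓ k 0 z) (vt ℓ k 1 z) + Th (vt ℓ k 1 z) (vt ℓ k 0 (z+1))) := by
      simp only [hEe]
      try norm_num
    rw [hEe0, h] at hE0
    simp only [hP, hQ]
    exact hE0
  have hECzero : (∑ j ∈ Finset.range k, P j) + X = 0 := by linarith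
  -- computing the value of the odd closed walk sum
  set Gf : ℕ → ℝ := fun t => g (vt ℓ k 0 (↑t)) with hGf
  set c : ℕ → ℤ := fun j => NN (vt ℓ k 0 (↑j)) (vt ℓ k 1 (↑j))
      + NN (vt ℓ k 1 (↑j)) (vt ℓ k 0 ((↑j)+1)) + 1 with hc
  set W : ℤ := (∑ j ∈ Finset.range k, c j)
      + NN (vt ℓ k 0 ((k : ZMod (2*k)))) (vt ℓ k 0 0) with hW
  have hPval : ∀ j : ℕ, P j = (2 * Gf (j+1) - 2 * Gf j) - r * (2*((c j : ℤ) : ℝ)) := by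
    intro j
    simp only [hP, hGf, hc]
    rw [hthform, hthform]
    push_cast
    ring
  have hSP : ∑ j ∈ Finset.range k, P j
      = (2 * Gf k - 2 * Gf 0) - r * (2*(((∑ j ∈ Finset.range k, c j) : ℤ) : ℝ)) := by
    rw [Finset.sum_congr rfl (fun j _ => hPval j), Finset.sum_sub_distrib]
    congr 1
    · exact Finset.sum_range_sub (fun t => 2 * Gf t) k
    · rw [← Finset.mul_sum]
      congr 1
      rw [← Finset.mul_sum]
      congr 1
      rw [← Int.cast_sum]
  have hXval : X = (2*Gf 0 - 2*Gf k)
      - r*(2*((NN (vt ℓ k 0 ((k : ZMod (2*k)))) (vt ℓ k 0 0) : ℤ) : ℝ)+1) := by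
    simp only [hX, hGf]
    rw [hthform, Nat.cast_zero]
    ring
  have hECval : (∑ j ∈ Finset.range k, P j) + X = - r * (2 * (W:ℝ) + 1) := by
    rw [hSP, hXval, hW]
    push_cast
    ring
  have hzero : - r * (2*(W:ℝ)+1) = 0 := by rw [← hECval]; exact hECzero
  have h2 : (2*(W:ℝ)+1) = 0 := by
    rcases mul_eq_zero.mp hzero with h | h
    · exact absurd (neg_eq_zero.mp h) hrne
    · exact h
  have h3 : (2*W + 1 : ℤ) = 0 := by exact_mod_cast h2
  omega

lemma dist_of_mem (a b : ℝ) (ha : a = 0 ∨ a = 1 ∨ a = 2 ∨ a = 3)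
    (hb : b = 0 ∨ b = 1 ∨ b = 2 ∨ b = 3) (hne : a ≠ b) :
    1 ≤ dist ((a : AddCircle (4:ℝ))) ((b : AddCircle (4:ℝ))) := by
  rw [dist_coe_eq 4 (by norm_num)]
  rcases ha with rfl|rfl|rfl|rfl <;> rcases hb with rfl|rfl|rfl|rfl <;>
    first
      | exact absurd rfl hne
      | (norm_num [Int.fract])

/-- The proper 4-colouring of `BQEven`. -/
def colR (ℓ k : ℕ) : Option (Fin ℓ × ZMod (2*k)) → ℝ
  | none => 3
  | some (i, j) =>
    if (i : ℕ) = 0 then (if j.val < k then 0 else 3)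
    else if (i : ℕ) = 1 then (if j.val < k then 1 else 2)
    else (if (i : ℕ) % 2 = 0 then 0 else 1)

lemma colR_mem (ℓ k : ℕ) (v : Option (Fin ℓ × ZMod (2*k))) :
    colR ℓ k v = 0 ∨ colR ℓ k v = 1 ∨ colR ℓ k v = 2 ∨ colR ℓ k v = 3 := by
  match v with
  | none => simp [colR]
  | some (i, j) => simp only [colR]; split_ifs <;> norm_num

lemma val_add_k (k : ℕ) (hk : 2 ≤ k) (j : ZMod (2*k)) :
    (j + (k : ZMod (2*k))).val < k ↔ ¬ (j.val < k) := by
  haveI : NeZero (2*k) := ⟨by omega⟩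
  have h1 : (j + (k : ZMod (2*k))).val = (j.val + k) % (2*k) := by
    rw [ZMod.val_add, ZMod.val_cast_of_lt (by omega)]
  have h2 : j.val < 2*k := ZMod.val_lt j
  rcases lt_or_ge j.val k with h | h
  · rw [h1, Nat.mod_eq_of_lt (by omega)]
    omega
  · have h3 : (j.val + k) % (2*k) = j.val - k := by
      have : j.val + k - 2*k < 2*k := by omega
      rw [Nat.mod_eq_sub_mod (by omega), Nat.mod_eq_of_lt this]
      omega
    rw [h1, h3]
    omega

lemma rel_ne {ℓ k : ℕ} (hℓ : 2 ≤ ℓ) (hk : 2 ≤ k) (u v : Option (Fin ℓ × ZMod (2*k)))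
    (h : bqEvenRel ℓ k u v) : colR ℓ k u ≠ colR ℓ k v := by
  match u, v with
  | none, v => exact absurd h id
  | some (i, j), none =>
    have hi : (i : ℕ) = ℓ - 1 := h
    simp only [colR]
    split_ifs <;> norm_num <;> omega
  | some (i, j), some (i', j') =>
    rcases h with ⟨h1, _⟩ | ⟨hcase, h2⟩
    · -- grid edge
      have h1' : (i' : ℕ) = (i : ℕ) + 1 := h1
      simp only [colR]
      split_ifs <;> (first | omega | norm_num) <;> omega
    · -- Möbius edge
      have h2' : j' = j + (k : ZMod (2*k)) := h2
      have hval : j'.val < k ↔ ¬ (j.val < k) := by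
        rw [h2']; exact val_add_k k hk j
      have hcase' : (((i:ℕ) = 0 ∧ (i':ℕ) = 0) ∨ ((i:ℕ) = 1 ∧ (i':ℕ) = 1)) := hcase
      simp only [colR]
      rcases hcase' with ⟨hi, hi'⟩ | ⟨hi, hi'⟩ <;>
        split_ifs <;> (first | omega | norm_num) <;> omega

lemma bq_upper (ℓ k : ℕ) (hℓ : 2 ≤ ℓ) (hk : 2 ≤ k) :
    ∃ c : Option (Fin ℓ × ZMod (2*k)) → AddCircle (4:ℝ),
      ∀ u v, (BQEven ℓ k).Adj u v → 1 ≤ dist (c u) (c v) := by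
  refine ⟨fun v => ((colR ℓ k v : ℝ) : AddCircle (4:ℝ)), ?_⟩
  intro u v huv
  rcases huv with ⟨hne, h | h⟩
  · exact dist_of_mem _ _ (colR_mem ℓ k u) (colR_mem ℓ k v) (rel_ne hℓ hk u v h)
  · exact dist_of_mem _ _ (colR_mem ℓ k u) (colR_mem ℓ k v) (rel_ne hℓ hk v u h).symm

/-- For integers `ℓ, k ≥ 2`, the circular chromatic number of the graph `BQ̂(ℓ, 2k)` (all of
whose edges are negative, so that a circular `r`-coloring simply requires adjacent vertices to
be at distance at least `1` on the circle `O_r`) equals `4`. -/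
theorem chiC_BQEven (ℓ k : ℕ) (hℓ : 2 ≤ ℓ) (hk : 2 ≤ k) :
    sInf {r : ℝ | 2 ≤ r ∧ ∃ c : Option (Fin ℓ × ZMod (2 * k)) → AddCircle r,
      ∀ u v, (BQEven ℓ k).Adj u v → 1 ≤ dist (c u) (c v)} = 4 := by
  have hmem : (4:ℝ) ∈ {r : ℝ | 2 ≤ r ∧ ∃ c : Option (Fin ℓ × ZMod (2 * k)) → AddCircle r,
      ∀ u v, (BQEven ℓ k).Adj u v → 1 ≤ dist (c u) (c v)} :=
    ⟨by norm_num, bq_upper ℓ k hℓ hk⟩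
  have hlb : ∀ x ∈ {r : ℝ | 2 ≤ r ∧ ∃ c : Option (Fin ℓ × ZMod (2 * k)) → AddCircle r,
      ∀ u v, (BQEven ℓ k).Adj u v → 1 ≤ dist (c u) (c v)}, (4:ℝ) ≤ x := by
    rintro x ⟨hx2, c, hc⟩
    by_contra hlt
    push_neg at hlt
    exact bq_lower ℓ k hℓ hk x hx2 hlt c hc
  exact le_antisymm (csInf_le ⟨4, hlb⟩ hmem) (le_csInf ⟨4, hmem⟩ hlb)
end
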